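/- If w ∈ W^J and α ∈ Φ⁺ \ Φ_J⁺ is a positive root not in the parabolic root subsystem, and ℓ(wr_α) = ℓ(w) + 1 (i.e., w ⋖ wr_α is a Bruhat cover), then wr_α is again a minimal-length coset representative, i.e., wr_α ∈ W^J. -/

import Mathlib

/-!
The Coxeter relations let `W` act on `W × ℤˣ`, the simple reflection `s i` sending `(t, ε)` to
`(s i * t * s i, ±ε)` with the sign flipped exactly when `t = s i`. The sign part of this action
is a cocycle `η(w, t)` which, for a reflection `t`, equals `-1` exactly when `ℓ (w t) < ℓ w`.

Two consequences of the cocycle identity give the theorem. First, if `w ⋖ w t` and `s i` is not a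
right descent of `w`, then it is not one of `w t` either, unless `t = s i`. Second, an element `x`
with no right descent in `W_J` is minimal in `x W_J`: lengths add on `y W_J` for a shortest `y` of
the coset, so a descent of `y⁻¹ x ∈ W_J` would be a descent of `x`. Since `w ∈ W^J` has no
descents in `W_J` and `r_α ∉ W_J`, both apply to `x = w r_α`.
-/

theorem mul_mul_inv_eq_iff_eq_inv_mul_mul {G : Type*} [Group G] (g v x : G) :
    g * v * g⁻¹ = x ↔ v = g⁻¹ * x * g := by
  constructor <;> rintro rfl <;> group

namespace CoxeterSystem

variable {B W : Type*} [Group W] {M : CoxeterMatrix B} (cs : CoxeterSystem M W)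

local prefix:100 "s " => cs.simple
local prefix:100 "π " => cs.wordProd
local prefix:100 "ℓ " => cs.length
local prefix:100 "ris " => cs.rightInvSeq

section SignRepresentation

theorem simple_conj_eq_iff (i : B) (v x : W) : s i * v * s i = x ↔ v = s i * x * s i := by
  simpa [cs.inv_simple] using mul_mul_inv_eq_iff_eq_inv_mul_mul (s i) v x

open Classical in
/-- Björner–Brenti's action of `s i` on pairs (reflection, sign), extended to all of `W × ℤˣ`
so that the Coxeter relations can be checked without restricting to reflections. -/
noncomputable def simpleSignPerm (i : B) : Equiv.Perm (W × ℤˣ) :=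
  Function.Involutive.toPerm
    (fun x => (s i * x.1 * s i, x.2 * if x.1 = s i then -1 else 1)) <| by
      rintro ⟨v, e⟩
      simp only [Prod.mk.injEq, simple_conj_eq_iff, simple_mul_simple_self, one_mul]
      refine ⟨by simp, ?_⟩
      split_ifs <;> simp

open Classical in
theorem simpleSignPerm_apply (i : B) (v : W) (e : ℤˣ) :
    cs.simpleSignPerm i (v, e) = (s i * v * s i, e * if v = s i then -1 else 1) := rfl

open Classical in
theorem simpleSignPerm_mul_pow_apply (i j : B) (k : ℕ) (v : W) (e : ℤˣ) :
    ((cs.simpleSignPerm i * cs.simpleSignPerm j) ^ k) (v, e) =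
      ((s i * s j) ^ k * v * ((s i * s j) ^ k)⁻¹,
        e * ∏ n ∈ Finset.range (2 * k),
          if v = ((s i * s j) ^ n)⁻¹ * s j then -1 else 1) := by
  set p := s i * s j
  have hsj : s j * p = p⁻¹ * s j := by simp [p, mul_assoc]
  have hstep (v : W) (e : ℤˣ) : (cs.simpleSignPerm i * cs.simpleSignPerm j) (v, e) =
      (p * v * p⁻¹, e * (if v = (p ^ 0)⁻¹ * s j then -1 else 1) *
        if v = (p ^ 1)⁻¹ * s j then -1 else 1) := by
    have hp : p⁻¹ * s j = s j * s i * s j := by simp [p, cs.inv_simple]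
    rw [Equiv.Perm.mul_apply, simpleSignPerm_apply, simpleSignPerm_apply]
    simp only [Prod.mk.injEq, simple_conj_eq_iff, pow_zero, pow_one, inv_one, one_mul, hp]
    exact ⟨by simp [p, cs.inv_simple, mul_assoc], trivial⟩
  have hshift (v : W) (n : ℕ) : p * v * p⁻¹ = (p ^ n)⁻¹ * s j ↔ v = (p ^ (n + 2))⁻¹ * s j := by
    rw [mul_mul_inv_eq_iff_eq_inv_mul_mul, mul_assoc, mul_assoc _ (s j), hsj]; group
  induction k generalizing v e with
  | zero => simp
  | succ k ih =>
    rw [pow_succ, Equiv.Perm.mul_apply, hstep, ih]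
    simp only [hshift]
    refine Prod.ext (by group) ?_
    rw [show 2 * (k + 1) = 2 * k + 1 + 1 by ring, Finset.prod_range_succ', Finset.prod_range_succ']
    simp only [zero_add, add_assoc, Nat.reduceAdd]
    ac_rfl

theorem simpleSignPerm_mul_pow_coxeterMatrix (i j : B) :
    (cs.simpleSignPerm i * cs.simpleSignPerm j) ^ M i j = 1 := by
  classical
  ext1 ⟨v, e⟩
  set f : ℕ → ℤˣ := fun n => if v = ((s i * s j) ^ n)⁻¹ * s j then -1 else 1
  have hperiodic (n : ℕ) : f (M i j + n) = f n := by
    simp only [f, pow_add, cs.simple_mul_simple_pow, one_mul]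
  have hsign : ∏ n ∈ Finset.range (2 * M i j), f n = 1 := by
    rw [two_mul, Finset.prod_range_add]
    simp only [hperiodic, Int.units_mul_self]
  rw [simpleSignPerm_mul_pow_apply, cs.simple_mul_simple_pow, Equiv.Perm.one_apply]
  simp only [one_mul, inv_one, mul_one]
  rw [hsign, mul_one]

noncomputable def signRep : W →* Equiv.Perm (W × ℤˣ) :=
  cs.lift ⟨cs.simpleSignPerm, cs.simpleSignPerm_mul_pow_coxeterMatrix⟩

theorem signRep_simple (i : B) : cs.signRep (s i) = cs.simpleSignPerm i :=
  cs.lift_apply_simple _ i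

open Classical in
theorem signRep_wordProd_apply (ω : List B) (v : W) (e : ℤˣ) :
    cs.signRep (π ω) (v, e) = (π ω * v * (π ω)⁻¹, e * (-1) ^ (ris ω).count v) := by
  induction ω generalizing e with
  | nil => simp
  | cons i ω ih =>
    rw [wordProd_cons, map_mul, Equiv.Perm.mul_apply, ih, signRep_simple,
      simpleSignPerm_apply]
    refine Prod.ext (by simp [cs.inv_simple, mul_assoc]) ?_
    rw [mul_mul_inv_eq_iff_eq_inv_mul_mul, rightInvSeq, List.count_cons]
    by_cases h : v = (π ω)⁻¹ * s i * π ω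
    · simp [h, pow_succ]
    · simp [h, Ne.symm h]

/-- The cocycle `η(w; t)` of Björner–Brenti. -/
noncomputable def inversionSign (w t : W) : ℤˣ := (cs.signRep w (t, 1)).2

open Classical in
theorem inversionSign_wordProd (ω : List B) (t : W) :
    cs.inversionSign (π ω) t = (-1) ^ (ris ω).count t := by
  simp [inversionSign, signRep_wordProd_apply]

theorem signRep_apply (w v : W) (e : ℤˣ) :
    cs.signRep w (v, e) = (w * v * w⁻¹, e * cs.inversionSign w v) := by
  obtain ⟨ω, rfl⟩ := cs.wordProd_surjective w
  simp [inversionSign, signRep_wordProd_apply]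

theorem inversionSign_one (t : W) : cs.inversionSign 1 t = 1 := by
  simp [inversionSign]

theorem inversionSign_mul (w₁ w₂ t : W) :
    cs.inversionSign (w₁ * w₂) t =
      cs.inversionSign w₂ t * cs.inversionSign w₁ (w₂ * t * w₂⁻¹) := by
  rw [inversionSign, map_mul, Equiv.Perm.mul_apply, signRep_apply cs w₂, signRep_apply, one_mul]

open Classical in
theorem inversionSign_simple (i : B) (t : W) :
    cs.inversionSign (s i) t = if t = s i then -1 else 1 := by
  simp [inversionSign, signRep_simple, simpleSignPerm_apply]

theorem IsReflection.inversionSign_self {t : W} (ht : cs.IsReflection t) :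
    cs.inversionSign t t = -1 := by
  obtain ⟨u, i, rfl⟩ := ht
  have hconj : u⁻¹ * (u * s i * u⁻¹) * u⁻¹⁻¹ = s i := by group
  have hu := cs.inversionSign_mul u u⁻¹ (u * s i * u⁻¹)
  have hus := cs.inversionSign_mul (u * s i) u⁻¹ (u * s i * u⁻¹)
  have hs := cs.inversionSign_mul u (s i) (s i)
  rw [mul_inv_cancel, inversionSign_one, hconj] at hu
  rw [hconj] at hus
  rw [inversionSign_simple, if_pos rfl, mul_inv_cancel_right] at hs
  rw [hus, hs, neg_one_mul, mul_neg, ← hu]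

theorem IsReflection.inversionSign_mul_self {t : W} (ht : cs.IsReflection t) (w : W) :
    cs.inversionSign (w * t) t = -cs.inversionSign w t := by
  rw [inversionSign_mul, ht.inversionSign_self, ht.mul_self, one_mul, ht.inv, neg_one_mul]

theorem length_mul_lt_of_inversionSign_eq_neg_one {w t : W} (h : cs.inversionSign w t = -1) :
    ℓ (w * t) < ℓ w := by
  classical
  obtain ⟨ω, hω, rfl⟩ := cs.exists_isReduced w
  have hmem : t ∈ ris ω := by
    by_contra hnot
    rw [inversionSign_wordProd, List.count_eq_zero.2 hnot, pow_zero] at h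
    exact absurd h (by decide)
  exact (cs.isRightInversion_of_mem_rightInvSeq hω hmem).2

theorem inversionSign_eq_neg_one_iff {w t : W} (ht : cs.IsReflection t) :
    cs.inversionSign w t = -1 ↔ ℓ (w * t) < ℓ w := by
  refine ⟨cs.length_mul_lt_of_inversionSign_eq_neg_one, fun hlt => ?_⟩
  rcases Int.units_eq_one_or (cs.inversionSign w t) with h | h
  · have := cs.length_mul_lt_of_inversionSign_eq_neg_one
      (by rw [ht.inversionSign_mul_self, h] : cs.inversionSign (w * t) t = -1)
    rw [mul_assoc, ht.mul_self, mul_one] at this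
    omega
  · exact h

theorem inversionSign_eq_one_iff {w t : W} (ht : cs.IsReflection t) :
    cs.inversionSign w t = 1 ↔ ℓ w < ℓ (w * t) := by
  rw [← neg_neg (1 : ℤˣ), ← Int.units_ne_iff_eq_neg, Ne, cs.inversionSign_eq_neg_one_iff ht]
  have := ht.length_mul_left_ne w
  omega

end SignRepresentation

theorem not_isRightDescent_mul_of_length_mul_eq_add_one {w t : W} {i : B}
    (ht : cs.IsReflection t) (hcov : ℓ (w * t) = ℓ w + 1) (hw : ¬cs.IsRightDescent w i)
    (hti : t ≠ s i) : ¬cs.IsRightDescent (w * t) i := by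
  -- With `x = w t s i`, the cocycle identity at `w t = x s i` turns the inversion `t` of `w t`
  -- into the inversion `s i t s i` of `x`; but `x (s i t s i) = w s i` is longer than `x`.
  intro hwt
  rw [isRightDescent_iff] at hwt
  rw [not_isRightDescent_iff] at hw
  have hsplit := cs.inversionSign_mul (w * t * s i) (s i) t
  have hr : cs.IsReflection (s i * t * s i) := by simpa [cs.inv_simple] using ht.conj (s i)
  rw [simple_mul_simple_cancel_right, inversionSign_simple, if_neg hti, one_mul, cs.inv_simple,
    (cs.inversionSign_eq_neg_one_iff ht).2 (by rw [mul_assoc, ht.mul_self, mul_one]; omega),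
    eq_comm, cs.inversionSign_eq_neg_one_iff hr] at hsplit
  have hws : w * t * s i * (s i * t * s i) = w * s i := by
    simp [mul_assoc, ← mul_assoc t t, ht.mul_self]
  rw [hws] at hsplit
  omega

section Parabolic

variable {J : Set B}

theorem mem_closure_of_inversionSign_eq_neg_one {v t : W}
    (hv : v ∈ Subgroup.closure (cs.simple '' J)) (h : cs.inversionSign v t = -1) :
    t ∈ Subgroup.closure (cs.simple '' J) := by
  induction hv using Subgroup.closure_induction generalizing t with
  | mem x hx =>
    obtain ⟨i, hi, rfl⟩ := hx
    rw [inversionSign_simple] at h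
    split_ifs at h with hti
    · exact hti ▸ Subgroup.subset_closure ⟨i, hi, rfl⟩
    · exact absurd h (by decide)
  | one => exact absurd h (by rw [inversionSign_one]; decide)
  | mul a b ha hb iha ihb =>
    rw [inversionSign_mul] at h
    rcases Int.units_eq_one_or (cs.inversionSign b t) with hb' | hb'
    · rw [hb', one_mul] at h
      simpa [Subgroup.mul_mem_cancel_left _ hb, Subgroup.mul_mem_cancel_right _ (inv_mem hb)]
        using iha h
    · exact ihb hb'
  | inv a ha ih =>
    have h1 := cs.inversionSign_mul a a⁻¹ t
    rw [mul_inv_cancel, inversionSign_one, h, neg_one_mul, eq_comm, neg_eq_iff_eq_neg] at h1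
    simpa [Subgroup.mul_mem_cancel_left _ (inv_mem ha), Subgroup.mul_mem_cancel_right _ ha]
      using ih h1

theorem simple_mem_closure_of_isRightDescent {v : W} {i : B}
    (hv : v ∈ Subgroup.closure (cs.simple '' J)) (hi : cs.IsRightDescent v i) :
    s i ∈ Subgroup.closure (cs.simple '' J) :=
  cs.mem_closure_of_inversionSign_eq_neg_one hv
    ((cs.inversionSign_eq_neg_one_iff (cs.isReflection_simple i)).2 hi)

theorem length_mul_eq_add_of_mem_closure {y v : W}
    (hy : ∀ u ∈ Subgroup.closure (cs.simple '' J), ℓ y ≤ ℓ (y * u))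
    (hv : v ∈ Subgroup.closure (cs.simple '' J)) : ℓ (y * v) = ℓ y + ℓ v := by
  induction hlen : ℓ v using Nat.strong_induction_on generalizing v with
  | _ n ih =>
    obtain rfl | hne := eq_or_ne v 1
    · simp [← hlen]
    obtain ⟨i, hi⟩ := cs.exists_rightDescent_of_ne_one hne
    have hsi := cs.simple_mem_closure_of_isRightDescent hv hi
    set v' := v * s i
    have hv' : v' ∈ Subgroup.closure (cs.simple '' J) := mul_mem hv hsi
    have hv'len : ℓ v' + 1 = ℓ v := cs.isRightDescent_iff.1 hi
    have hr : cs.IsReflection (v' * s i * v'⁻¹) := (cs.isReflection_simple i).conj v'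
    have hyr : cs.inversionSign y (v' * s i * v'⁻¹) = 1 :=
      (cs.inversionSign_eq_one_iff hr).2 <| lt_of_le_of_ne
        (hy _ (mul_mem (mul_mem hv' hsi) (inv_mem hv'))) (hr.length_mul_left_ne y).symm
    have hv's : cs.inversionSign v' (s i) = 1 :=
      (cs.inversionSign_eq_one_iff (cs.isReflection_simple i)).2 (by
        rw [simple_mul_simple_cancel_right]; omega)
    have hyv' : cs.inversionSign (y * v') (s i) = 1 := by
      rw [inversionSign_mul, hv's, hyr, one_mul]
    rw [inversionSign_eq_one_iff _ (cs.isReflection_simple i)] at hyv'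
    have hyv : y * v = y * v' * s i := by simp [v', mul_assoc]
    have := ih (ℓ v') (by omega) hv' rfl
    rw [hyv]
    rcases cs.length_mul_simple (y * v') i with h | h <;> omega

theorem length_le_length_mul_of_forall_not_isRightDescent {x u : W}
    (hx : ∀ i, s i ∈ Subgroup.closure (cs.simple '' J) → ¬cs.IsRightDescent x i)
    (hu : u ∈ Subgroup.closure (cs.simple '' J)) : ℓ x ≤ ℓ (x * u) := by
  set H := Subgroup.closure (cs.simple '' J)
  obtain ⟨u₀, hu₀, hmin⟩ := (InvImage.wf (fun u => ℓ (x * u)) wellFounded_lt).has_min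
    (H : Set W) ⟨1, one_mem H⟩
  have hy (u : W) (hu : u ∈ H) : ℓ (x * u₀) ≤ ℓ (x * u₀ * u) := by
    rw [mul_assoc]
    exact not_lt.1 (hmin (u₀ * u) (mul_mem hu₀ hu))
  suffices u₀ = 1 by simpa [this] using hy u hu
  by_contra hne
  obtain ⟨i, hi⟩ := cs.exists_rightDescent_of_ne_one (inv_ne_one.2 hne)
  have hsi := cs.simple_mem_closure_of_isRightDescent (inv_mem hu₀) hi
  have h1 := cs.length_mul_eq_add_of_mem_closure hy (inv_mem hu₀)
  have h2 := cs.length_mul_eq_add_of_mem_closure hy (mul_mem (inv_mem hu₀) hsi)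
  rw [mul_inv_cancel_right] at h1
  rw [← mul_assoc, mul_inv_cancel_right] at h2
  exact hx i hsi (by rw [IsRightDescent] at hi ⊢; omega)

end Parabolic

end CoxeterSystem

theorem bruhat_edge_stays_minimal_general
    {B W V : Type*} [Group W] {M : CoxeterMatrix B}
    (cs : CoxeterSystem M W)
    (Pos : Set V) (refl : V → W)
    (hrefl : ∀ α ∈ Pos, cs.IsReflection (refl α))
    (J : Set B) (WJ : Subgroup W)
    (hWJ : WJ = Subgroup.closure (cs.simple '' J))
    (PosJ : Set V)
    (hPosJ : ∀ α, α ∈ PosJ ↔ (α ∈ Pos ∧ refl α ∈ WJ))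
    (w : W)
    (hmin : ∀ u ∈ WJ, cs.length w ≤ cs.length (w * u))
    (α : V) (hα : α ∈ Pos) (hαJ : α ∉ PosJ)
    (hcov : cs.length (w * refl α) = cs.length w + 1) :
    ∀ u ∈ WJ, cs.length (w * refl α) ≤ cs.length (w * refl α * u) := by
  subst hWJ
  have htJ : refl α ∉ Subgroup.closure (cs.simple '' J) := fun h => hαJ ((hPosJ α).2 ⟨hα, h⟩)
  refine fun u hu => cs.length_le_length_mul_of_forall_not_isRightDescent (fun i hi => ?_) hu
  refine cs.not_isRightDescent_mul_of_length_mul_eq_add_one (hrefl α hα) hcov ?_ ?_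
  · exact not_lt.2 (hmin _ hi)
  · exact fun h => htJ (h ▸ hi)

/-- Let `W` be a finite Weyl group with positive roots `Pos`,
`J` a subset of the simple indices, `W_J` the corresponding parabolic subgroup and
`PosJ = Φ_J⁺` the positive roots of the parabolic subsystem (characterized as the
positive roots whose reflection lies in `W_J`).  If `w ∈ W^J` (i.e. `w` has minimal
length in its coset `w W_J`), `α ∈ Φ⁺ \ Φ_J⁺`, and `ℓ(w r_α) = ℓ(w) + 1`
(a Bruhat cover), then `w r_α ∈ W^J` as well. -/
theorem bruhat_edge_stays_minimal
    {B W V : Type*} [Group W] [Finite W] [AddCommGroup V] {M : CoxeterMatrix B}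
    (cs : CoxeterSystem M W)
    (Pos : Set V) (refl : V → W)
    (hrefl : ∀ α ∈ Pos, cs.IsReflection (refl α))
    (J : Set B) (WJ : Subgroup W)
    (hWJ : WJ = Subgroup.closure (cs.simple '' J))
    (PosJ : Set V)
    (hPosJ : ∀ α, α ∈ PosJ ↔ (α ∈ Pos ∧ refl α ∈ WJ))
    (w : W)
    (hmin : ∀ u ∈ WJ, cs.length w ≤ cs.length (w * u))
    (α : V) (hα : α ∈ Pos) (hαJ : α ∉ PosJ)
    (hcov : cs.length (w * refl α) = cs.length w + 1) :
    ∀ u ∈ WJ, cs.length (w * refl α) ≤ cs.length (w * refl α * u) :=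
  bruhat_edge_stays_minimal_general cs Pos refl hrefl J WJ hWJ PosJ hPosJ w hmin α hα hαJ hcov
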